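/- arXiv:1304.0219 — 2 statements merged into one kernel-verified Lean document; each statement's English description precedes it below -/
import Mathlib

section
/- (Riedtmann's Formula) Let q be a prime power, Q a finite quiver, and M, N, E finite-dimensional representations of Q over 𝔽_q. Then P^E_{MN} = e_E(M,N) · |Aut(E)| / |Hom(M,N)|, where e_E(M,N) denotes the number of Yoneda-equivalence classes of short exact sequences 0 → N → E′ → M → 0 whose middle term E′ is isomorphic to E. -/
open CategoryTheory Module

/-- A pair of morphisms `f : N ⟶ E`, `g : E ⟶ M` of quiver representations forming a
short exact sequence `0 → N →f E →g M → 0` (i.e. vertexwise injective, surjective and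
exact in the middle). -/
def IsShortExactPair {k : Type} [Field k] {Q : Type} [Quiver.{1} Q]
    {M N E : Paths Q ⥤ ModuleCat k} (f : N ⟶ E) (g : E ⟶ M) : Prop :=
  (∀ v : Paths Q, Function.Injective (f.app v)) ∧
  (∀ v : Paths Q, Function.Surjective (g.app v)) ∧
  (∀ v : Paths Q, LinearMap.range (f.app v).hom = LinearMap.ker (g.app v).hom)

/-- `hallP M N E` is the number `P^E_{MN}` of pairs `(f,g)` such that
`0 → N →f E →g M → 0` is a short exact sequence. -/
noncomputable def hallP {k : Type} [Field k] {Q : Type} [Quiver.{1} Q]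
    (M N E : Paths Q ⥤ ModuleCat k) : ℕ :=
  Nat.card {fg : (N ⟶ E) × (E ⟶ M) // IsShortExactPair fg.1 fg.2}

/-- The type of all extensions `0 → N → E′ → M → 0` of `M` by `N`. -/
def ExtensionsOf {k : Type} [Field k] {Q : Type} [Quiver.{1} Q]
    (M N : Paths Q ⥤ ModuleCat k) : Type _ :=
  Σ E' : Paths Q ⥤ ModuleCat k, {fg : (N ⟶ E') × (E' ⟶ M) // IsShortExactPair fg.1 fg.2}

/-- Yoneda equivalence of extensions: two short exact sequences `0 → N → E′ → M → 0`
and `0 → N → E″ → M → 0` are equivalent when there is an isomorphism `E′ ≅ E″`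
commuting with the given maps from `N` and to `M`. -/
def YonedaEquiv {k : Type} [Field k] {Q : Type} [Quiver.{1} Q]
    {M N : Paths Q ⥤ ModuleCat k} (x y : ExtensionsOf M N) : Prop :=
  ∃ β : x.1 ≅ y.1, x.2.1.1 ≫ β.hom = y.2.1.1 ∧ β.hom ≫ y.2.1.2 = x.2.1.2

/-!
The group `Aut E` acts on the set of short exact pairs `(f, g)` with middle term `E` by
`α • (f, g) = (f ≫ α, α⁻¹ ≫ g)`. Transporting an extension along an isomorphism `E′ ≅ E` shows that
the orbits are exactly the Yoneda classes of extensions with middle term isomorphic to `E`. An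
automorphism `α` fixes `(f, g)` iff `f ≫ (α - 1) = 0` and `(α - 1) ≫ g = 0`, i.e., by exactness,
iff `α = 1 + g h f` for a unique `h : M ⟶ N`; so every stabilizer has `|Hom(M, N)|` elements and
the orbit–stabilizer theorem gives `P^E_{MN} · |Hom(M, N)| = e_E(M, N) · |Aut E|`.
-/

theorem CategoryTheory.ShortComplex.ShortExact.exists_eq_g_comp_comp_f {C : Type*} [Category C]
    [Abelian C] {S : ShortComplex C} (hS : S.ShortExact) {u : S.X₂ ⟶ S.X₂}
    (hf : S.f ≫ u = 0) (hg : u ≫ S.g = 0) : ∃ h : S.X₃ ⟶ S.X₁, u = S.g ≫ h ≫ S.f := by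
  have := hS.mono_f
  have := hS.epi_g
  have hdesc : hS.exact.desc u hf ≫ S.g = 0 := by
    rw [← cancel_epi S.g, ← Category.assoc, hS.exact.g_desc, hg, Limits.comp_zero]
  exact ⟨hS.exact.lift _ hdesc, by simp⟩

namespace IsShortExactPair

variable {k : Type} [Field k] {Q : Type} [Quiver.{1} Q] {M N E E' : Paths Q ⥤ ModuleCat k}
  {f : N ⟶ E} {g : E ⟶ M}

theorem comp_eq_zero (hfg : IsShortExactPair f g) : f ≫ g = 0 := by
  ext v x
  exact (hfg.2.2 v).le ⟨x, rfl⟩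

theorem shortExact_app (hfg : IsShortExactPair f g) (v : Paths Q) :
    (ShortComplex.mk (f.app v) (g.app v) (by rw [← NatTrans.comp_app, hfg.comp_eq_zero,
      NatTrans.app_zero])).ShortExact where
  exact := (ShortComplex.moduleCat_exact_iff_range_eq_ker _).2 (hfg.2.2 v)
  mono_f := (ModuleCat.mono_iff_injective _).2 (hfg.1 v)
  epi_g := (ModuleCat.epi_iff_surjective _).2 (hfg.2.1 v)

theorem mono (hfg : IsShortExactPair f g) : Mono f :=
  have := fun v => (hfg.shortExact_app v).mono_f
  NatTrans.mono_of_mono_app f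

theorem epi (hfg : IsShortExactPair f g) : Epi g :=
  have := fun v => (hfg.shortExact_app v).epi_g
  NatTrans.epi_of_epi_app g

theorem exists_eq_comp_comp (hfg : IsShortExactPair f g) {u : E ⟶ E} (hf : f ≫ u = 0)
    (hg : u ≫ g = 0) : ∃ h : M ⟶ N, u = g ≫ h ≫ f := by
  have hS := hfg.shortExact_app
  have := fun v => (hS v).mono_f
  have := fun v => (hS v).epi_g
  choose h hh using fun v => (hS v).exists_eq_g_comp_comp_f (u := u.app v)
    (by simpa using congr_app hf v) (by simpa using congr_app hg v)
  refine ⟨{ app := h, naturality := fun v w a => ?_ }, NatTrans.ext (funext hh)⟩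
  rw [← cancel_epi (g.app v), ← cancel_mono (f.app w)]
  simp only [Category.assoc, ← g.naturality_assoc, ← hh, u.naturality, f.naturality]
  rw [hh v]
  simp

theorem comp_iso (hfg : IsShortExactPair f g) (β : E ≅ E') :
    IsShortExactPair (f ≫ β.hom) (β.inv ≫ g) := by
  refine ⟨fun v => ?_, fun v => ?_, fun v => ?_⟩
  · exact (β.app v).toLinearEquiv.injective.comp (hfg.1 v)
  · exact (hfg.2.1 v).comp (β.app v).toLinearEquiv.symm.surjective
  · have hβ : ((β.hom.app v).hom : E.obj v →ₗ[k] E'.obj v) = (β.app v).toLinearEquiv := rfl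
    have hβ' : ((β.inv.app v).hom : E'.obj v →ₗ[k] E.obj v) = (β.app v).toLinearEquiv.symm := rfl
    simp only [NatTrans.comp_app, ModuleCat.hom_comp, LinearMap.range_comp, LinearMap.ker_comp,
      hfg.2.2 v, hβ, hβ']
    exact Submodule.map_equiv_eq_comap_symm _ _

end IsShortExactPair

theorem MulAction.card_mul_eq_card_orbits_mul_card_group {G X : Type*} [Group G]
    [MulAction G X] [Finite G] [Finite X] {c : ℕ} (hc : ∀ x : X, Nat.card (stabilizer G x) = c) :
    Nat.card X * c = Nat.card (orbitRel.Quotient G X) * Nat.card G := by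
  have := Fintype.ofFinite (orbitRel.Quotient G X)
  rw [Nat.card_congr (selfEquivSigmaOrbitsQuotientStabilizer G X), Nat.card_sigma,
    Finset.sum_mul, Nat.card_eq_fintype_card (α := orbitRel.Quotient G X), ← Finset.card_univ,
    ← smul_eq_mul, ← Finset.sum_const]
  refine Finset.sum_congr rfl fun ω _ => ?_
  rw [← hc ω.out, ← Subgroup.card_eq_card_quotient_mul_card_subgroup]

@[simps]
def CategoryTheory.Aut.onePlusOfSqEqZero {C : Type*} [Category C] [Preadditive C] {X : C}
    (u : X ⟶ X) (hu : u ≫ u = 0) : Aut X where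
  hom := 𝟙 X + u
  inv := 𝟙 X - u
  hom_inv_id := by simp [hu]
  inv_hom_id := by simp [hu]

section ShortExactPairs

variable {k : Type} [Field k] {Q : Type} [Quiver.{1} Q] {M N E : Paths Q ⥤ ModuleCat k}

variable (M N E) in
abbrev ShortExactPairs := {fg : (N ⟶ E) × (E ⟶ M) // IsShortExactPair fg.1 fg.2}

instance : SMul (Aut E) (ShortExactPairs M N E) where
  smul α s := ⟨(s.1.1 ≫ α.hom, α.inv ≫ s.1.2), s.2.comp_iso α⟩

@[simp]
theorem ShortExactPairs.smul_val (α : Aut E) (s : ShortExactPairs M N E) :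
    (α • s).1 = (s.1.1 ≫ α.hom, α.inv ≫ s.1.2) :=
  rfl

instance : MulAction (Aut E) (ShortExactPairs M N E) where
  one_smul _ := Subtype.ext (Prod.ext (Category.comp_id _) (Category.id_comp _))
  mul_smul _ _ _ := Subtype.ext (Prod.ext (Category.assoc _ _ _).symm (Category.assoc _ _ _))

theorem ShortExactPairs.mem_stabilizer_iff {α : Aut E} {s : ShortExactPairs M N E} :
    α ∈ MulAction.stabilizer (Aut E) s ↔ s.1.1 ≫ α.hom = s.1.1 ∧ α.hom ≫ s.1.2 = s.1.2 := by
  rw [MulAction.mem_stabilizer_iff, Subtype.ext_iff, smul_val, Prod.ext_iff]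
  exact and_congr_right' ((Iso.inv_comp_eq (α := α)).trans eq_comm)

noncomputable def IsShortExactPair.homEquivStabilizer {f : N ⟶ E} {g : E ⟶ M}
    (hfg : IsShortExactPair f g) :
    (M ⟶ N) ≃ MulAction.stabilizer (Aut E) (⟨(f, g), hfg⟩ : ShortExactPairs M N E) := by
  have hsq (h : M ⟶ N) : (g ≫ h ≫ f) ≫ g ≫ h ≫ f = 0 := by
    simp [reassoc_of% hfg.comp_eq_zero]
  refine Equiv.ofBijective
    (fun h => ⟨Aut.onePlusOfSqEqZero _ (hsq h), ShortExactPairs.mem_stabilizer_iff.2 ?_⟩) ⟨?_, ?_⟩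
  · simp [reassoc_of% hfg.comp_eq_zero, hfg.comp_eq_zero]
  · intro h h' hh
    have := hfg.epi
    have := hfg.mono
    simpa only [Aut.onePlusOfSqEqZero_hom, add_right_inj, cancel_epi, cancel_mono] using
      congr_arg (fun α : MulAction.stabilizer (Aut E) _ => α.1.hom) hh
  · rintro ⟨α, hα⟩
    obtain ⟨hf, hg⟩ := ShortExactPairs.mem_stabilizer_iff.1 hα
    obtain ⟨h, hh⟩ := hfg.exists_eq_comp_comp (u := α.hom - 𝟙 E) (by simp [hf]) (by simp [hg])
    exact ⟨h, Subtype.ext (Aut.ext (by simp [← hh]))⟩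

theorem equivalence_yonedaEquiv : Equivalence (YonedaEquiv (M := M) (N := N)) where
  refl _ := ⟨Iso.refl _, by simp, by simp⟩
  symm := fun ⟨β, hf, hg⟩ => ⟨β.symm, by simp [← hf], by simp [← hg]⟩
  trans := fun ⟨β, hf, hg⟩ ⟨γ, hf', hg'⟩ =>
    ⟨β ≪≫ γ, by simp [reassoc_of% hf, hf'], by simp [hg, hg']⟩

variable (E) in
def ShortExactPairs.toExtension (s : ShortExactPairs M N E) :
    {z : ExtensionsOf M N // Nonempty (z.1 ≅ E)} :=
  ⟨⟨E, s⟩, ⟨Iso.refl E⟩⟩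

theorem ShortExactPairs.yonedaEquiv_toExtension_iff {s t : ShortExactPairs M N E} :
    YonedaEquiv (s.toExtension E).1 (t.toExtension E).1 ↔ ∃ α : Aut E, α • s = t := by
  constructor
  · rintro ⟨β, hf, hg⟩
    exact ⟨β, Subtype.ext (Prod.ext hf ((Iso.eq_inv_comp β).2 hg).symm)⟩
  · rintro ⟨α, rfl⟩
    exact ⟨α, rfl, α.hom_inv_id_assoc _⟩

variable (M N E) in
noncomputable def orbitsEquivYonedaClasses :
    MulAction.orbitRel.Quotient (Aut E) (ShortExactPairs M N E) ≃
      Quot (fun x y : {z : ExtensionsOf M N // Nonempty (z.1 ≅ E)} => YonedaEquiv x.1 y.1) := by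
  refine Equiv.ofBijective (Quotient.lift (fun s => Quot.mk _ (s.toExtension E))
    fun s t hst => Quot.sound ?_) ⟨?_, ?_⟩
  · exact equivalence_yonedaEquiv.symm (ShortExactPairs.yonedaEquiv_toExtension_iff.2 hst)
  · rintro ⟨s⟩ ⟨t⟩ hst
    refine Quotient.sound (ShortExactPairs.yonedaEquiv_toExtension_iff.1
      (equivalence_yonedaEquiv.symm ?_))
    exact ((equivalence_yonedaEquiv.comap Subtype.val).eqvGen_iff).1 (Quot.eqvGen_exact hst)
  · rintro ⟨⟨E', ⟨f, g⟩, hfg⟩, ⟨ι⟩⟩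
    exact ⟨⟦⟨(f ≫ ι.hom, ι.inv ≫ g), hfg.comp_iso ι⟩⟧,
      Quot.sound ⟨ι.symm, by simp [ShortExactPairs.toExtension], rfl⟩⟩

end ShortExactPairs

theorem finite_hom_of_finiteDimensional {k : Type} [Field k] [Finite k] {Q : Type} [Quiver.{1} Q]
    [Finite Q] {X Y : Paths Q ⥤ ModuleCat k} (hX : ∀ v, FiniteDimensional k (X.obj v))
    (hY : ∀ v, FiniteDimensional k (Y.obj v)) : Finite (X ⟶ Y) := by
  have : Finite (Paths Q) := inferInstanceAs (Finite Q)
  have := fun v => Module.finite_of_finite k (M := X.obj v)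
  have := fun v => Module.finite_of_finite k (M := Y.obj v)
  refine Finite.of_injective (fun η v => (η.app v : X.obj v → Y.obj v)) fun η η' h => ?_
  ext v x
  exact congr_fun (congr_fun h v) x

/-- **Riedtmann's formula.**  For finite-dimensional representations `M`, `N`, `E` of a
finite quiver `Q` over `𝔽_q`, one has
`P^E_{MN} = e_E(M,N) · |Aut E| / |Hom(M,N)|`, where `e_E(M,N)` is the number of
Yoneda-equivalence classes of short exact sequences `0 → N → E′ → M → 0` whose middle
term is isomorphic to `E`. -/
theorem riedtmann_formula
    (p n : ℕ) [Fact p.Prime] (hn : n ≠ 0)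
    (Q : Type) [Quiver.{1} Q] [Finite Q] [∀ a b : Q, Finite (a ⟶ b)]
    (M N E : Paths Q ⥤ ModuleCat (GaloisField p n))
    (hM : ∀ v : Paths Q, FiniteDimensional (GaloisField p n) (M.obj v))
    (hN : ∀ v : Paths Q, FiniteDimensional (GaloisField p n) (N.obj v))
    (hE : ∀ v : Paths Q, FiniteDimensional (GaloisField p n) (E.obj v)) :
    (hallP M N E : ℚ)
      = (Nat.card (Quot (fun x y : {z : ExtensionsOf M N // Nonempty (z.1 ≅ E)} =>
            YonedaEquiv x.1 y.1)) : ℚ)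
          * Nat.card (Aut E) / Nat.card (M ⟶ N) := by
  have : Finite (M ⟶ N) := finite_hom_of_finiteDimensional hM hN
  have : Finite (N ⟶ E) := finite_hom_of_finiteDimensional hN hE
  have : Finite (E ⟶ M) := finite_hom_of_finiteDimensional hE hM
  have : Finite (E ⟶ E) := finite_hom_of_finiteDimensional hE hE
  have : Finite (Aut E) := Finite.of_injective (fun α : Aut E => α.hom) fun _ _ => Aut.ext
  have key : Nat.card (ShortExactPairs M N E) * Nat.card (M ⟶ N) =
      Nat.card (MulAction.orbitRel.Quotient (Aut E) (ShortExactPairs M N E)) * Nat.card (Aut E) :=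
    MulAction.card_mul_eq_card_orbits_mul_card_group (G := Aut E)
      fun s : ShortExactPairs M N E => (Nat.card_congr s.2.homEquivStabilizer).symm
  have hHom : (Nat.card (M ⟶ N) : ℚ) ≠ 0 := Nat.cast_ne_zero.2 (Nat.card_ne_zero.2 ⟨⟨0⟩, ‹_›⟩)
  rw [hallP, ← Nat.card_congr (orbitsEquivYonedaClasses M N E), eq_div_iff hHom]
  exact_mod_cast key
end

section
/- Let X be a groupoid with finitely many objects and finite hom-sets. Then ∑_{[x]} 1/|Aut(x)| = ∑_{x} 1/|Mor(x,−)|, where the left-hand sum ranges over the isomorphism classes of objects of X (with Aut(x) the automorphism group of a representative x), the right-hand sum ranges over all objects x of X, and Mor(x,−) denotes the set of all morphisms of X whose source is x. -/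
/-!
Choosing an isomorphism `x ≅ y` for each `y` isomorphic to `x` turns a morphism out of `x` into
a pair (its target, an automorphism of `x`), so `|Mor(x,−)| = |[x]| · |Aut x|`. Summing
`1 / (|[x]| · |Aut x|)` over the `|[x]|` objects of an isomorphism class gives `1 / |Aut x|`.
-/

open CategoryTheory

universe u v

theorem finsum_div_natCard_fiber {α β K : Type*} [Finite α] [Field K] [CharZero K]
    (π : α → β) (hπ : Function.Surjective π) (g : β → K) :
    ∑ᶠ a, g (π a) / Nat.card {a' // π a' = π a} = ∑ᶠ b, g b := by
  classical
  have := Finite.of_surjective π hπ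
  cases nonempty_fintype α
  cases nonempty_fintype β
  rw [finsum_eq_sum_of_fintype, finsum_eq_sum_of_fintype, ← Finset.sum_fiberwise Finset.univ π]
  refine Finset.sum_congr rfl fun b _ => ?_
  obtain ⟨a, rfl⟩ := hπ b
  have hcard : Nat.card {a' // π a' = π a} = (Finset.univ.filter (π · = π a)).card := by
    rw [Nat.card_eq_fintype_card, Fintype.card_subtype]
  have hpos : (Finset.univ.filter (π · = π a)).card ≠ 0 :=
    Finset.card_ne_zero.mpr ⟨a, Finset.mem_filter.mpr ⟨Finset.mem_univ a, rfl⟩⟩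
  rw [Finset.sum_congr rfl fun a' ha' => by rw [(Finset.mem_filter.mp ha').2], Finset.sum_const,
    hcard, nsmul_eq_mul, mul_div_cancel₀ _ (Nat.cast_ne_zero.mpr hpos)]

namespace CategoryTheory.Groupoid

variable {C : Type u} [Groupoid.{v} C]

noncomputable def sigmaHomEquivProdAut (x : C) :
    (Σ y : C, x ⟶ y) ≃ {y : C // IsIsomorphic x y} × Aut x where
  toFun f :=
    let y : {y : C // IsIsomorphic x y} := ⟨f.1, ⟨asIso f.2⟩⟩
    (y, asIso f.2 ≪≫ y.2.some.symm)
  invFun p := ⟨p.1.1, p.2.hom ≫ p.1.2.some.hom⟩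
  left_inv f := by simp
  right_inv p := by ext <;> simp

theorem natCard_sigma_hom (x : C) :
    Nat.card (Σ y : C, x ⟶ y) = Nat.card {y : C // IsIsomorphic x y} * Nat.card (Aut x) := by
  rw [Nat.card_congr (sigmaHomEquivProdAut x), Nat.card_prod]

end CategoryTheory.Groupoid

/-- **Alternate formula for groupoid cardinality.**  For a groupoid `X` with finitely
many objects and finite hom-sets,
`∑_{[x]} 1/|Aut x| = ∑_{x} 1/|Mor(x,−)|`, where the left sum ranges over isomorphism
classes of objects and the right sum over all objects, `Mor(x,−)` denoting the set of
all morphisms with source `x`. -/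
theorem groupoid_cardinality_eq_sum_over_objects
    (X : Type u) [Groupoid.{v} X] [Finite X] [∀ x y : X, Finite (x ⟶ y)] :
    ∑ᶠ c : Quotient (isIsomorphicSetoid X), (1 : ℚ) / Nat.card (Aut c.out)
      = ∑ᶠ x : X, (1 : ℚ) / Nat.card (Σ y : X, x ⟶ y) := by
  rw [← finsum_div_natCard_fiber _ Quotient.mk_surjective]
  refine finsum_congr fun x => ?_
  obtain ⟨e⟩ : IsIsomorphic (⟦x⟧ : Quotient (isIsomorphicSetoid X)).out x :=
    Quotient.mk_out (s := isIsomorphicSetoid X) x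
  have hclass : Nat.card {y // (⟦y⟧ : Quotient (isIsomorphicSetoid X)) = ⟦x⟧}
      = Nat.card {y // IsIsomorphic x y} :=
    Nat.card_congr <| Equiv.subtypeEquivRight fun y => Quotient.eq.trans (Setoid.comm' _)
  rw [hclass, Nat.card_congr (Aut.autMulEquivOfIso e).toEquiv, Groupoid.natCard_sigma_hom,
    Nat.cast_mul, div_div, mul_comm]
end
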